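/- arXiv:2308.10338 — 7 statements merged into one kernel-verified Lean document; each statement's English description precedes it below -/
import Mathlib

section
/- Let A, B, H, K be subsets of Ω with A∩H∩Kᶜ ≠ ∅. Then the Cooper–Calabrese iterated conditional (B|K)|_C(A|H) = B|(K∩(Hᶜ∪A)) and the conditional event [(A|H)∧_S(B|K)]|_C(A|H) = ((A∩H∩B∩K)∪(A∩H∩Kᶜ)∪(Hᶜ∩B∩K)) | ((A∩K)∪(Hᶜ∩K)∪(A∩H∩Kᶜ)) are distinct conditional events. Indeed, A∩H∩Kᶜ is disjoint from K∩(Hᶜ∪A) but is contained in the conditioning event (A∩K)∪(Hᶜ∩K)∪(A∩H∩Kᶜ) of the second, so the two conditioning events differ. -/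
/-- With A∩H∩Kᶜ ≠ ∅, the Cooper–Calabrese iterated conditional
(B|K)|_C(A|H) = B|(K∩(Hᶜ∪A)) and [(A|H)∧_S(B|K)]|_C(A|H) have different
conditioning events: A∩H∩Kᶜ is disjoint from K∩(Hᶜ∪A) but contained in
(A∩K)∪(Hᶜ∩K)∪(A∩H∩Kᶜ), hence the two conditional events are distinct. -/
theorem stmt_3 {Ω : Type*} (A B H K : Set Ω) (h : A ∩ H ∩ Kᶜ ≠ ∅) :
    (A ∩ H ∩ Kᶜ) ∩ (K ∩ (Hᶜ ∪ A)) = ∅ ∧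
    A ∩ H ∩ Kᶜ ⊆ (A ∩ K) ∪ (Hᶜ ∩ K) ∪ (A ∩ H ∩ Kᶜ) ∧
    K ∩ (Hᶜ ∪ A) ≠ (A ∩ K) ∪ (Hᶜ ∩ K) ∪ (A ∩ H ∩ Kᶜ) := by
  obtain ⟨x, hx⟩ := Set.nonempty_iff_ne_empty.mpr h
  obtain ⟨⟨hA, hH⟩, hK⟩ := hx
  refine ⟨?_, fun y hy => Or.inr hy, ?_⟩
  · ext y; simp only [Set.mem_inter_iff, Set.mem_empty_iff_false, iff_false]
    rintro ⟨⟨_, hyK⟩, hyK', _⟩; exact hyK hyK'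
  · intro heq
    have : x ∈ K ∩ (Hᶜ ∪ A) := heq ▸ Or.inr ⟨⟨hA, hH⟩, hK⟩
    exact hK this.1
end

section
/- Let A, B, H, K be subsets of Ω with H ≠ ∅, K ≠ ∅ and (H∩K)∪(Aᶜ∩H)∪(Bᶜ∩K) ≠ ∅. Then the Kleene conjunction Goodman–Nguyen-implies each conjunct: (A|H)∧_K(B|K) ⊑ A|H and (A|H)∧_K(B|K) ⊑ B|K, where E|D ⊑ F|C means E∩D ⊆ F∩C and Fᶜ∩C ⊆ Eᶜ∩D. -/
/-- Goodman–Nguyen inclusion of conditional events: E|D ⊑ F|C iff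
E∩D ⊆ F∩C and Fᶜ∩C ⊆ Eᶜ∩D. -/
def GNle {Ω : Type*} (E D F C : Set Ω) : Prop :=
  E ∩ D ⊆ F ∩ C ∧ Fᶜ ∩ C ⊆ Eᶜ ∩ D

/-- The Kleene conjunction Goodman–Nguyen-implies each conjunct. -/
theorem stmt_4 {Ω : Type*} (A B H K : Set Ω)
    (hH : H ≠ ∅) (hK : K ≠ ∅)
    (hD : (H ∩ K) ∪ (Aᶜ ∩ H) ∪ (Bᶜ ∩ K) ≠ ∅) :
    GNle (A ∩ H ∩ B ∩ K) ((H ∩ K) ∪ (Aᶜ ∩ H) ∪ (Bᶜ ∩ K)) A H ∧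
    GNle (A ∩ H ∩ B ∩ K) ((H ∩ K) ∪ (Aᶜ ∩ H) ∪ (Bᶜ ∩ K)) B K := by
  refine ⟨⟨?_, ?_⟩, ⟨?_, ?_⟩⟩ <;> intro x hx <;>
    simp only [GNle, Set.mem_inter_iff, Set.mem_union, Set.mem_compl_iff] at * <;> tauto
end

section
/- Let A, B, H, K be subsets of Ω with suitable nonemptiness of the conditioning events. Then the Kleene conjunction Goodman–Nguyen-implies the Farrell iterated conditional: (A|H)∧_K(B|K) ⊑ (B|K)|_F(A|H). Concretely, A∩H∩B∩K ⊆ A∩H∩B∩K and the false-part of the Farrell iterated conditional, (A∩H∩Bᶜ∩K)∪(Hᶜ∩Bᶜ∩K), is contained in the false-part of the conjunction, (Aᶜ∩H)∪(Bᶜ∩K). -/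
/-- The Kleene conjunction Goodman–Nguyen-implies the Farrell
iterated conditional; concretely the Farrell false-part is contained in the
conjunction's false-part. -/
theorem stmt_6 {Ω : Type*} (A B H K : Set Ω)
    (hD₁ : (H ∩ K) ∪ (Aᶜ ∩ H) ∪ (Bᶜ ∩ K) ≠ ∅)
    (hD₂ : (A ∩ H ∩ B ∩ K) ∪ (A ∩ H ∩ Bᶜ ∩ K) ∪ (Hᶜ ∩ Bᶜ ∩ K) ≠ ∅) :
    GNle (A ∩ H ∩ B ∩ K) ((H ∩ K) ∪ (Aᶜ ∩ H) ∪ (Bᶜ ∩ K))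
      (A ∩ H ∩ B ∩ K) ((A ∩ H ∩ B ∩ K) ∪ (A ∩ H ∩ Bᶜ ∩ K) ∪ (Hᶜ ∩ Bᶜ ∩ K)) ∧
    (A ∩ H ∩ Bᶜ ∩ K) ∪ (Hᶜ ∩ Bᶜ ∩ K) ⊆ (Aᶜ ∩ H) ∪ (Bᶜ ∩ K) := by
  constructor
  · constructor
    · intro x hx
      simp only [Set.mem_inter_iff, Set.mem_union, Set.mem_compl_iff] at *
      tauto
    · intro x hx
      simp only [Set.mem_inter_iff, Set.mem_union, Set.mem_compl_iff] at *
      tauto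
  · intro x hx
    simp only [Set.mem_inter_iff, Set.mem_union, Set.mem_compl_iff] at *
    tauto
end

section
/- Fix x, y ∈ [0,1] and z < xy. Then (x, y, z) does not belong to the convex hull of the six points Q₁=(1,1,1), Q₂=(0,y,0), Q₃=(x,1,1), Q₄=(1,0,0), Q₅=(x,0,0), Q₆=(1,y,1) in ℝ³. Proof idea: the affine functional f(X,Y,Z) = yX + Y − Z satisfies f(Qₕ) ≤ y for all six points, hence f ≤ y on the convex hull, while f(x,y,z) = xy + y − z > y. -/
/-- For x, y ∈ [0,1] and z < xy, the point (x,y,z) is not in the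
convex hull of the six points Q₁,…,Q₆ in ℝ³. -/
theorem stmt_11 (x y z : ℝ) (hx0 : 0 ≤ x) (hx1 : x ≤ 1) (hy0 : 0 ≤ y) (hy1 : y ≤ 1)
    (hz : z < x * y) :
    (x, y, z) ∉ convexHull ℝ
      ({((1 : ℝ), (1 : ℝ), (1 : ℝ)), ((0 : ℝ), y, (0 : ℝ)), ((x : ℝ), (1 : ℝ), (1 : ℝ)),
        ((1 : ℝ), (0 : ℝ), (0 : ℝ)), ((x : ℝ), (0 : ℝ), (0 : ℝ)), ((1 : ℝ), y, (1 : ℝ))} :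
        Set (ℝ × ℝ × ℝ)) := by
  intro hmem
  have hlin : IsLinearMap ℝ (fun p : ℝ × ℝ × ℝ => y * p.1 + p.2.1 - p.2.2) := by
    constructor
    · intro a b; simp [Prod.fst_add, Prod.snd_add]; ring
    · intro c a; simp [Prod.smul_fst, Prod.smul_snd, smul_eq_mul]; ring
  have hconv : Convex ℝ {p : ℝ × ℝ × ℝ | y * p.1 + p.2.1 - p.2.2 ≤ y} :=
    convex_halfSpace_le hlin y
  have hsub : ({((1 : ℝ), (1 : ℝ), (1 : ℝ)), ((0 : ℝ), y, (0 : ℝ)),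
      ((x : ℝ), (1 : ℝ), (1 : ℝ)), ((1 : ℝ), (0 : ℝ), (0 : ℝ)),
      ((x : ℝ), (0 : ℝ), (0 : ℝ)), ((1 : ℝ), y, (1 : ℝ))} : Set (ℝ × ℝ × ℝ)) ⊆
      {p : ℝ × ℝ × ℝ | y * p.1 + p.2.1 - p.2.2 ≤ y} := by
    intro p hp
    simp only [Set.mem_insert_iff, Set.mem_singleton_iff] at hp
    rcases hp with h | h | h | h | h | h <;> subst h <;> simp <;> nlinarith
  have := convexHull_min hsub hconv hmem
  simp only [Set.mem_setOf_eq] at this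
  nlinarith
end

section
/- Fix x ∈ [0,1) and y ∈ (0,1], and let z > xy. Then each of the five points Q₁=(1,1,1), Q₂=(0,y,0), Q₃=(1,0,0), Q₄=(x,y,0), Q₅=(1,y,z) in ℝ³ satisfies f(Qₕ) > f(x,y,z), where f(X,Y,Z) = yX + Y − Z. Consequently (x,y,z) is not a convex combination of Q₁,…,Q₅. -/
/-- For x ∈ [0,1), y ∈ (0,1], z > xy, the affine functional
f(X,Y,Z) = yX + Y − Z is strictly larger at each of the five points
Q₁,…,Q₅ than at (x,y,z); consequently (x,y,z) is not a convex combination of them. -/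
theorem stmt_13 (x y z : ℝ) (hx0 : 0 ≤ x) (hx1 : x < 1) (hy0 : 0 < y) (hy1 : y ≤ 1)
    (hz : x * y < z) :
    (∀ q ∈ ({((1 : ℝ), (1 : ℝ), (1 : ℝ)), ((0 : ℝ), y, (0 : ℝ)), ((1 : ℝ), (0 : ℝ), (0 : ℝ)),
        ((x : ℝ), y, (0 : ℝ)), ((1 : ℝ), y, z)} : Set (ℝ × ℝ × ℝ)),
      y * x + y - z < y * q.1 + q.2.1 - q.2.2) ∧
    (x, y, z) ∉ convexHull ℝ
      ({((1 : ℝ), (1 : ℝ), (1 : ℝ)), ((0 : ℝ), y, (0 : ℝ)), ((1 : ℝ), (0 : ℝ), (0 : ℝ)),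
        ((x : ℝ), y, (0 : ℝ)), ((1 : ℝ), y, z)} : Set (ℝ × ℝ × ℝ)) := by
  have hQ : ∀ q ∈ ({((1 : ℝ), (1 : ℝ), (1 : ℝ)), ((0 : ℝ), y, (0 : ℝ)),
      ((1 : ℝ), (0 : ℝ), (0 : ℝ)), ((x : ℝ), y, (0 : ℝ)), ((1 : ℝ), y, z)} : Set (ℝ × ℝ × ℝ)),
      y * x + y - z < y * q.1 + q.2.1 - q.2.2 := by
    intro q hq
    simp only [Set.mem_insert_iff, Set.mem_singleton_iff] at hq
    rcases hq with h | h | h | h | h <;> subst h <;> simp <;> nlinarith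
  refine ⟨hQ, fun hmem => ?_⟩
  have hlin : IsLinearMap ℝ (fun p : ℝ × ℝ × ℝ => y * p.1 + p.2.1 - p.2.2) := by
    constructor <;> intro a b <;> simp [Prod.fst_add, Prod.snd_add, smul_eq_mul] <;> ring
  have hconv : Convex ℝ {p : ℝ × ℝ × ℝ | y * x + y - z < y * p.1 + p.2.1 - p.2.2} :=
    convex_halfSpace_gt hlin _
  have := convexHull_min (fun q hq => hQ q hq) hconv hmem
  exact lt_irrefl (y * x + y - z) this
end

section
/- Let x ∈ (0,1] and y ∈ [0,1] with (x,y) ≠ (1,1). Then x(1 − xy) > 0 and max((x + y − 1)/x, 0) ≤ (x + y − 2xy)/(x(1 − xy)). That is, the lower bound μ'_S and the upper bound μ''_S for the prevision of the Sobocinski-based iterated conditional (B|K)|_S(A|H) form a nonempty interval [μ'_S, μ''_S]. -/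
/-- For x ∈ (0,1], y ∈ [0,1] with (x,y) ≠ (1,1), the bounds for
the Sobocinski-based iterated conditional form a nonempty interval:
x(1−xy) > 0 and max((x+y−1)/x, 0) ≤ (x+y−2xy)/(x(1−xy)). -/
theorem stmt_18 (x y : ℝ) (hx0 : 0 < x) (hx1 : x ≤ 1) (hy0 : 0 ≤ y) (hy1 : y ≤ 1)
    (hne : (x, y) ≠ (1, 1)) :
    0 < x * (1 - x * y) ∧
    max ((x + y - 1) / x) 0 ≤ (x + y - 2 * (x * y)) / (x * (1 - x * y)) := by
  have hxy : x * y < 1 := by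
    rcases lt_or_eq_of_le hx1 with h | h
    · nlinarith
    · rcases lt_or_eq_of_le hy1 with h' | h'
      · nlinarith
      · exact absurd (by rw [h, h']) hne
  have hpos : 0 < x * (1 - x * y) := by nlinarith
  refine ⟨hpos, ?_⟩
  rw [max_le_iff]
  constructor
  · rw [div_le_div_iff₀ hx0 hpos]
    nlinarith [mul_nonneg (mul_nonneg hx0.le hy0) (mul_nonneg (sub_nonneg.2 hx1) (sub_nonneg.2 hy1)), sq_nonneg (x - y), mul_nonneg (mul_nonneg hx0.le hy0) (sq_nonneg (x - y))]
  · apply div_nonneg _ hpos.le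
    nlinarith
end

section
/- (Lewis-style triviality.) Let P be a finitely additive probability measure on an algebra of subsets of Ω, and let A, C be events with P(A∩C) > 0 and P(A∩Cᶜ) > 0; define conditional probability P(E|D) := P(E∩D)/P(D) whenever P(D) > 0. If the iterated-conditional total probability identity P(C|A) = P(C|A∩C)·P(C) + P(C|A∩Cᶜ)·P(Cᶜ) holds (as forced by the Import–Export principle), then P(C|A) = P(C). -/
/-- Lewis-style triviality: Given a finitely additive probability
P with P(A∩C) > 0 and P(A∩Cᶜ) > 0, if the iterated-conditional total probability
identity (forced by the Import–Export principle) holds, then P(C|A) = P(C). -/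
theorem stmt_19 {Ω : Type*} (P : Set Ω → ℝ)
    (hempty : P ∅ = 0) (huniv : P Set.univ = 1)
    (hnonneg : ∀ s : Set Ω, 0 ≤ P s)
    (hadd : ∀ s t : Set Ω, Disjoint s t → P (s ∪ t) = P s + P t)
    (A C : Set Ω)
    (hAC : 0 < P (A ∩ C)) (hAC' : 0 < P (A ∩ Cᶜ))
    (htot : P (C ∩ A) / P A =
      (P (C ∩ (A ∩ C)) / P (A ∩ C)) * P C +
      (P (C ∩ (A ∩ Cᶜ)) / P (A ∩ Cᶜ)) * P Cᶜ) :
    P (C ∩ A) / P A = P C := by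
  have h1 : C ∩ (A ∩ C) = A ∩ C := by
    ext x; simp only [Set.mem_inter_iff]; tauto
  have h2 : C ∩ (A ∩ Cᶜ) = ∅ := by
    ext x; simp only [Set.mem_inter_iff, Set.mem_compl_iff, Set.mem_empty_iff_false]; tauto
  rw [htot, h1, h2, hempty, div_self hAC.ne', zero_div, one_mul, zero_mul, add_zero]
end
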